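/- (Section 7(v), Demoulin reduction) Suppose τ : ℤ → ℝ² → ℝ is a family of positive twice continuously differentiable functions satisfying the 2D Toda tau-function equation ∂_u∂_v ln τ_n = 1 − τ_{n−1}τ_{n+1}/τ_n², together with the symmetry τ_{−n+1} = τ_n and the 6-periodicity τ_{n+6} = τ_n for all n ∈ ℤ. Define h = τ₂/τ₁ and k = τ₂/τ₃. Then (h,k) satisfies the Demoulin system: ∂_u∂_v ln h = h − 1/(h·k) and ∂_u∂_v ln k = k − 1/(k·h). Moreover, setting h_n = τ_{n+1}τ_{n−1}/τ_n², one has h₁ = h₀, h₂ = h₅, h₃ = h₄ and h₁·h₂·h₃ = 1. -/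

import Mathlib

/-!
Write `hₙ = τₙ₊₁τₙ₋₁/τₙ²`, so that the Toda equation reads `∂ᵤ∂ᵥ ln τₙ = 1 - hₙ`. Since
`ln h = ln τ₂ - ln τ₁` and `ln k = ln τ₂ - ln τ₃`, linearity of `∂ᵤ∂ᵥ` on C² functions gives
`∂ᵤ∂ᵥ ln h = h₁ - h₂` and `∂ᵤ∂ᵥ ln k = h₃ - h₂`. The symmetry and the periodicity leave only
three distinct tau-functions, `τ₀ = τ₁`, `τ₋₁ = τ₂ = τ₅` and `τ₃ = τ₄`, whence
`h₁ = τ₂/τ₁ = h`, `h₃ = τ₂/τ₃ = k` and `h₂ = τ₁τ₃/τ₂² = 1/(hk)`.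
-/

/-- Mixed second partial derivative ∂_u∂_v of a real-valued function of two real variables. -/
noncomputable def mixedDerivR (f : ℝ → ℝ → ℝ) (u v : ℝ) : ℝ :=
  deriv (fun u' => deriv (fun v' => f u' v') v) u

open Function

section MixedDeriv

variable {F G : ℝ → ℝ → ℝ}

lemma deriv_slice_eq_fderiv_uncurry {u v : ℝ} (hF : DifferentiableAt ℝ (uncurry F) (u, v)) :
    deriv (fun v' => F u v') v = fderiv ℝ (uncurry F) (u, v) (0, 1) := by
  have h := (hF.hasFDerivAt.comp v (hasFDerivAt_prodMk_right u v)).hasDerivAt.deriv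
  simp only [ContinuousLinearMap.comp_apply, ContinuousLinearMap.inr_apply] at h
  exact h

lemma differentiableAt_slice {u v : ℝ} (hF : DifferentiableAt ℝ (uncurry F) (u, v)) :
    DifferentiableAt ℝ (fun v' => F u v') v :=
  hF.comp v ((differentiableAt_const u).prodMk differentiableAt_id)

lemma differentiable_deriv_slice (hF : ContDiff ℝ 2 (uncurry F)) (v : ℝ) :
    Differentiable ℝ (fun u => deriv (fun v' => F u v') v) := by
  have hF1 : Differentiable ℝ (uncurry F) := hF.differentiable (by norm_num)
  have hslice : (fun u => deriv (fun v' => F u v') v)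
      = fun u => fderiv ℝ (uncurry F) (u, v) (0, 1) :=
    funext fun u => deriv_slice_eq_fderiv_uncurry (hF1 (u, v))
  rw [hslice]
  have hC1 : ContDiff ℝ 1 (fun u => fderiv ℝ (uncurry F) (u, v) (0, 1)) :=
    ((hF.fderiv_right (m := 1) le_rfl).clm_apply contDiff_const).comp
      (contDiff_id.prodMk contDiff_const)
  exact hC1.differentiable one_ne_zero

lemma mixedDerivR_sub (hF : ContDiff ℝ 2 (uncurry F)) (hG : ContDiff ℝ 2 (uncurry G))
    (u v : ℝ) :
    mixedDerivR (fun u' v' => F u' v' - G u' v') u v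
      = mixedDerivR F u v - mixedDerivR G u v := by
  have hF1 : Differentiable ℝ (uncurry F) := hF.differentiable (by norm_num)
  have hG1 : Differentiable ℝ (uncurry G) := hG.differentiable (by norm_num)
  have hinner : (fun u' => deriv (fun v' => F u' v' - G u' v') v)
      = fun u' => deriv (fun v' => F u' v') v - deriv (fun v' => G u' v') v :=
    funext fun u' =>
      deriv_fun_sub (differentiableAt_slice (hF1 (u', v))) (differentiableAt_slice (hG1 (u', v)))
  unfold mixedDerivR
  rw [hinner]
  exact deriv_fun_sub (differentiable_deriv_slice hF v u) (differentiable_deriv_slice hG v u)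

lemma contDiff_uncurry_log {n : WithTop ℕ∞} {f : ℝ → ℝ → ℝ} (hf : ContDiff ℝ n (uncurry f))
    (hpos : ∀ u v, 0 < f u v) :
    ContDiff ℝ n (uncurry fun u v => Real.log (f u v)) :=
  hf.log fun p => (hpos p.1 p.2).ne'

lemma mixedDerivR_log_div {f g : ℝ → ℝ → ℝ} (hf : ContDiff ℝ 2 (uncurry f))
    (hg : ContDiff ℝ 2 (uncurry g)) (hfpos : ∀ u v, 0 < f u v) (hgpos : ∀ u v, 0 < g u v)
    (u v : ℝ) :
    mixedDerivR (fun u' v' => Real.log (f u' v' / g u' v')) u v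
      = mixedDerivR (fun u' v' => Real.log (f u' v')) u v
        - mixedDerivR (fun u' v' => Real.log (g u' v')) u v := by
  have hlog : (fun u' v' => Real.log (f u' v' / g u' v'))
      = fun u' v' => Real.log (f u' v') - Real.log (g u' v') := by
    funext u' v'
    exact Real.log_div (hfpos u' v').ne' (hgpos u' v').ne'
  rw [hlog]
  exact mixedDerivR_sub (contDiff_uncurry_log hf hfpos) (contDiff_uncurry_log hg hgpos) u v

end MixedDeriv

section SymmetricPeriodic

variable {α : Type*} {t : ℤ → α}

lemma apply_one_eq_apply_zero (hsym : ∀ n, t (-n + 1) = t n) : t 1 = t 0 := by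
  simpa using hsym 0

lemma apply_neg_one_eq_apply_two (hsym : ∀ n, t (-n + 1) = t n) : t (-1) = t 2 := by
  simpa using hsym 2

lemma apply_four_eq_apply_three (hsym : ∀ n, t (-n + 1) = t n) (hper : Periodic t 6) :
    t 4 = t 3 := by
  simpa using (hsym (-3)).trans (hper (-3)).symm

lemma apply_five_eq_apply_two (hsym : ∀ n, t (-n + 1) = t n) (hper : Periodic t 6) :
    t 5 = t 2 := by
  simpa using (hper (-1)).trans (apply_neg_one_eq_apply_two hsym)

end SymmetricPeriodic

section TodaRatio

/-- The paper's `hₙ`. -/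
noncomputable def todaRatio (t : ℤ → ℝ) (n : ℤ) : ℝ := t (n + 1) * t (n - 1) / t n ^ 2

variable {t : ℤ → ℝ}

lemma todaRatio_one (hsym : ∀ n, t (-n + 1) = t n) (ht : ∀ n, t n ≠ 0) :
    todaRatio t 1 = t 2 / t 1 := by
  have h10 := apply_one_eq_apply_zero hsym
  have := ht 1
  simp only [todaRatio]
  norm_num [← h10]
  field_simp

lemma todaRatio_three (hsym : ∀ n, t (-n + 1) = t n) (hper : Periodic t 6) (ht : ∀ n, t n ≠ 0) :
    todaRatio t 3 = t 2 / t 3 := by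
  have h43 := apply_four_eq_apply_three hsym hper
  have := ht 3
  simp only [todaRatio]
  norm_num [h43]
  field_simp

lemma todaRatio_two (ht : ∀ n, t n ≠ 0) :
    todaRatio t 2 = 1 / (t 2 / t 1 * (t 2 / t 3)) := by
  have := ht 1; have := ht 2; have := ht 3
  simp only [todaRatio]
  norm_num
  field_simp

lemma todaRatio_one_eq_zero (hsym : ∀ n, t (-n + 1) = t n) : todaRatio t 1 = todaRatio t 0 := by
  simp only [todaRatio]
  norm_num [apply_one_eq_apply_zero hsym, apply_neg_one_eq_apply_two hsym]
  ring

lemma todaRatio_two_eq_five (hsym : ∀ n, t (-n + 1) = t n) (hper : Periodic t 6) :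
    todaRatio t 2 = todaRatio t 5 := by
  simp only [todaRatio]
  norm_num [apply_five_eq_apply_two hsym hper, apply_four_eq_apply_three hsym hper,
    hper.eq.trans (apply_one_eq_apply_zero hsym).symm]
  ring

lemma todaRatio_three_eq_four (hsym : ∀ n, t (-n + 1) = t n) (hper : Periodic t 6) :
    todaRatio t 3 = todaRatio t 4 := by
  simp only [todaRatio]
  norm_num [apply_five_eq_apply_two hsym hper, apply_four_eq_apply_three hsym hper]
  ring

lemma todaRatio_one_mul_two_mul_three (hsym : ∀ n, t (-n + 1) = t n) (hper : Periodic t 6)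
    (ht : ∀ n, t n ≠ 0) :
    todaRatio t 1 * todaRatio t 2 * todaRatio t 3 = 1 := by
  rw [todaRatio_one hsym ht, todaRatio_two ht, todaRatio_three hsym hper ht]
  have := ht 1; have := ht 2; have := ht 3
  field_simp

end TodaRatio

/-- Section 7(v), Demoulin reduction: if τ is a positive C² solution of the 2D Toda
tau-function equation with the symmetry τ₋ₙ₊₁ = τₙ and 6-periodicity τₙ₊₆ = τₙ, then
h = τ₂/τ₁ and k = τ₂/τ₃ satisfy the Demoulin system, and the quantities
hₙ = τₙ₊₁τₙ₋₁/τₙ² satisfy h₁ = h₀, h₂ = h₅, h₃ = h₄ and h₁h₂h₃ = 1. -/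
theorem demoulin_reduction (τ : ℤ → ℝ → ℝ → ℝ)
    (hpos : ∀ (n : ℤ) (u v : ℝ), 0 < τ n u v)
    (hC2 : ∀ n : ℤ, ContDiff ℝ 2 (Function.uncurry (τ n)))
    (hToda : ∀ (n : ℤ) (u v : ℝ),
      mixedDerivR (fun u' v' => Real.log (τ n u' v')) u v
        = 1 - τ (n - 1) u v * τ (n + 1) u v / (τ n u v) ^ 2)
    (hsym : ∀ (n : ℤ) (u v : ℝ), τ (-n + 1) u v = τ n u v)
    (hper : ∀ (n : ℤ) (u v : ℝ), τ (n + 6) u v = τ n u v)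
    (h k : ℝ → ℝ → ℝ)
    (hh : ∀ u v, h u v = τ 2 u v / τ 1 u v)
    (hk : ∀ u v, k u v = τ 2 u v / τ 3 u v)
    (hosc : ℤ → ℝ → ℝ → ℝ)
    (hhosc : ∀ (n : ℤ) (u v : ℝ),
      hosc n u v = τ (n + 1) u v * τ (n - 1) u v / (τ n u v) ^ 2) :
    (∀ u v : ℝ, mixedDerivR (fun u' v' => Real.log (h u' v')) u v
        = h u v - 1 / (h u v * k u v))
    ∧ (∀ u v : ℝ, mixedDerivR (fun u' v' => Real.log (k u' v')) u v
        = k u v - 1 / (k u v * h u v))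
    ∧ (∀ u v : ℝ, hosc 1 u v = hosc 0 u v ∧ hosc 2 u v = hosc 5 u v ∧ hosc 3 u v = hosc 4 u v)
    ∧ (∀ u v : ℝ, hosc 1 u v * hosc 2 u v * hosc 3 u v = 1) := by
  obtain rfl : h = fun u v => τ 2 u v / τ 1 u v := funext₂ hh
  obtain rfl : k = fun u v => τ 2 u v / τ 3 u v := funext₂ hk
  obtain rfl : hosc = fun n u v => todaRatio (τ · u v) n := funext fun n => funext₂ (hhosc n)
  have hne (u v : ℝ) (n : ℤ) : τ n u v ≠ 0 := (hpos n u v).ne'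
  have hsym' (u v : ℝ) (n : ℤ) : τ (-n + 1) u v = τ n u v := hsym n u v
  have hper' (u v : ℝ) : Periodic (τ · u v) 6 := fun n => hper n u v
  have hlog_div (m n : ℤ) (u v : ℝ) :
      mixedDerivR (fun u' v' => Real.log (τ m u' v' / τ n u' v')) u v
        = todaRatio (τ · u v) n - todaRatio (τ · u v) m := by
    rw [mixedDerivR_log_div (hC2 m) (hC2 n) (hpos m) (hpos n), hToda, hToda, todaRatio,
      todaRatio]
    ring
  refine ⟨fun u v => ?_, fun u v => ?_, fun u v => ⟨?_, ?_, ?_⟩, fun u v => ?_⟩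
  · rw [hlog_div, todaRatio_one (hsym' u v) (hne u v), todaRatio_two (hne u v)]
  · rw [hlog_div, todaRatio_three (hsym' u v) (hper' u v) (hne u v), todaRatio_two (hne u v),
      mul_comm (τ 2 u v / τ 3 u v)]
  · exact todaRatio_one_eq_zero (hsym' u v)
  · exact todaRatio_two_eq_five (hsym' u v) (hper' u v)
  · exact todaRatio_three_eq_four (hsym' u v) (hper' u v)
  · exact todaRatio_one_mul_two_mul_three (hsym' u v) (hper' u v) (hne u v)
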